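/- arXiv:math/0602539 — 3 statements merged into one kernel-verified Lean document; each statement's English description precedes it below -/
import Mathlib

section
/- Let A = F_2[x,v,t]/(x^{n+1}, v^2 - ((n+1)/2 mod 2)·t·x^{n-1}) with n odd, and let Δ: A → A be F_2-linear with Δ(x) = Δ(v) = Δ(t) = 0, satisfying the BV relation Δ(ab) = Δ(a)b + aΔ(b) + [a,b], where [·,·] is a symmetric biderivation with [x,v] = 1, [x,t] = 0, [v,t] = 0, and [x,x] = [v,v] = [t,t] = 0. Then Δ(x^a v^b t^c) = a·b·x^{a-1} t^c (mod 2) for all 0 ≤ a ≤ n, b ∈ {0,1}, c ≥ 0. -/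
/-!
Since `Δ` vanishes on the generators and the bracket vanishes on all pairs of them except
`[x, v] = 1`, the Leibniz rule gives `[v, xᵃ] = a·xᵃ⁻¹` and `[w, tᶜ] = 0` whenever
`[w, t] = 0`, while the BV relation gives `Δ(xᵃ) = Δ(tᶜ) = 0`. Expanding
`Δ(xᵃvᵇ · tᶜ)` and `Δ(xᵃ · v)` with the BV relation then leaves only the term `[xᵃ, v]`.
-/

section Biderivation

variable {A : Type*} [CommRing A] {br : A → A → A}

theorem br_one_right (hleib : ∀ a b c : A, br a (b * c) = br a b * c + br a c * b) (a : A) :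
    br a 1 = 0 := by
  simpa using hleib a 1 1

theorem br_pow_right (hleib : ∀ a b c : A, br a (b * c) = br a b * c + br a c * b)
    (a b : A) (k : ℕ) : br a (b ^ k) = k • (br a b * b ^ (k - 1)) := by
  induction k with
  | zero => simp [br_one_right hleib]
  | succ k ih =>
    rw [pow_succ, hleib, ih]
    rcases k with _ | k
    · simp
    · simp only [Nat.add_sub_cancel, pow_succ, succ_nsmul]
      ring

theorem br_pow_right_eq_zero (hleib : ∀ a b c : A, br a (b * c) = br a b * c + br a c * b)
    {a b : A} (hab : br a b = 0) (k : ℕ) : br a (b ^ k) = 0 := by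
  simp [br_pow_right hleib, hab]

theorem br_mul_left (hsymm : ∀ a b : A, br a b = br b a)
    (hleib : ∀ a b c : A, br a (b * c) = br a b * c + br a c * b) (a b c : A) :
    br (a * b) c = br a c * b + br b c * a := by
  rw [hsymm, hleib, hsymm c a, hsymm c b]

variable {Δ : A → A}

theorem bv_one (hleib : ∀ a b c : A, br a (b * c) = br a b * c + br a c * b)
    (hBV : ∀ a b : A, Δ (a * b) = Δ a * b + a * Δ b + br a b) : Δ 1 = 0 := by
  simpa [br_one_right hleib] using hBV 1 1

theorem bv_pow_eq_zero (hleib : ∀ a b c : A, br a (b * c) = br a b * c + br a c * b)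
    (hBV : ∀ a b : A, Δ (a * b) = Δ a * b + a * Δ b + br a b)
    {b : A} (hΔ : Δ b = 0) (hbb : br b b = 0) (k : ℕ) : Δ (b ^ k) = 0 := by
  induction k with
  | zero => simpa using bv_one hleib hBV
  | succ k ih => rw [pow_succ', hBV, hΔ, ih, br_pow_right_eq_zero hleib hbb, zero_mul, mul_zero,
      add_zero, add_zero]

end Biderivation

theorem stmt4_general (A : Type*) [CommRing A]
    (n : ℕ)
    (x v t : A)
    (Δ : A → A)
    (br : A → A → A)
    (hsymm : ∀ a b : A, br a b = br b a)
    (hleib : ∀ a b c : A, br a (b * c) = br a b * c + br a c * b)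
    (hBV : ∀ a b : A, Δ (a * b) = Δ a * b + a * Δ b + br a b)
    (hΔx : Δ x = 0) (hΔv : Δ v = 0) (hΔt : Δ t = 0)
    (hxv : br x v = 1) (hxt : br x t = 0) (hvt : br v t = 0)
    (hxx : br x x = 0) (htt : br t t = 0) :
    ∀ a b c : ℕ, a ≤ n → b ≤ 1 →
      Δ (x ^ a * v ^ b * t ^ c) = (a * b) • (x ^ (a - 1) * t ^ c) := by
  intro a b c _ hb
  have hΔxa : Δ (x ^ a) = 0 := bv_pow_eq_zero hleib hBV hΔx hxx a
  have hbr_xavb_t : br (x ^ a * v ^ b) t = 0 := by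
    rw [br_mul_left hsymm hleib, hsymm _ t, hsymm _ t,
      br_pow_right_eq_zero hleib (hsymm t x ▸ hxt), br_pow_right_eq_zero hleib (hsymm t v ▸ hvt)]
    ring
  rw [hBV, bv_pow_eq_zero hleib hBV hΔt htt, br_pow_right_eq_zero hleib hbr_xavb_t,
    mul_zero, add_zero, add_zero]
  interval_cases b
  · simp [hΔxa]
  · have hbr_xa_v : br (x ^ a) v = a • x ^ (a - 1) := by
      rw [hsymm, br_pow_right hleib, hsymm v x, hxv, one_mul]
    rw [pow_one, hBV, hΔxa, hΔv, hbr_xa_v, mul_one, zero_mul, mul_zero, zero_add, zero_add,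
      smul_mul_assoc]

/-- In `A = F₂[x,v,t]/(x^{n+1}, v² - ((n+1)/2 mod 2)·t·x^{n-1})` with `n` odd, a BV operator
Δ vanishing on generators, and bracket a symmetric biderivation with `[x,v]=1`, `[x,t]=0`,
`[v,t]=0`, one has `Δ(xᵃvᵇt^c) = ab·x^{a-1}t^c` (mod 2). -/
theorem stmt4 (A : Type*) [CommRing A] (hchar : (2 : A) = 0)
    (n : ℕ) (hn : Odd n)
    (x v t : A) (hxn : x ^ (n + 1) = 0)
    (hv2 : v ^ 2 = (((n + 1) / 2) % 2) • (t * x ^ (n - 1)))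
    (Δ : A → A) (hΔadd : ∀ a b : A, Δ (a + b) = Δ a + Δ b)
    (br : A → A → A)
    (hsymm : ∀ a b : A, br a b = br b a)
    (haddr : ∀ a b c : A, br a (b + c) = br a b + br a c)
    (hleib : ∀ a b c : A, br a (b * c) = br a b * c + br a c * b)
    (hBV : ∀ a b : A, Δ (a * b) = Δ a * b + a * Δ b + br a b)
    (hΔx : Δ x = 0) (hΔv : Δ v = 0) (hΔt : Δ t = 0)
    (hxv : br x v = 1) (hxt : br x t = 0) (hvt : br v t = 0)
    (hxx : br x x = 0) (hvv : br v v = 0) (htt : br t t = 0) :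
    ∀ a b c : ℕ, a ≤ n → b ≤ 1 →
      Δ (x ^ a * v ^ b * t ^ c) = (a * b) • (x ^ (a - 1) * t ^ c) :=
  stmt4_general A n x v t Δ br hsymm hleib hBV hΔx hΔv hΔt hxv hxt hvt hxx htt
end

section
/- Let A = F_2[x,u,t]/(x^{n+1}, u^2, t x^n, u x^n) with n even, and let Δ: A → A be F_2-linear with Δ(x) = Δ(u) = Δ(t) = 0, satisfying Δ(ab) = Δ(a)b + aΔ(b) + [a,b], where [·,·] is a symmetric biderivation with [x,u] = x, [x,t] = 0, [u,t] = t, and [x,x] = [u,u] = [t,t] = 0. Then Δ(x^a u^b t^c) = (a+c)·b·x^a t^c (mod 2). -/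
/-!
Since `Δ g = 0` and `[g, g] = 0` for `g = x, t`, the BV identity makes Δ vanish on all powers of
`x` and `t`, and on a product of two Δ-closed elements Δ is just their bracket. The Leibniz rule
gives `[g, hᵏ] = k hᵏ⁻¹ [g, h]`, hence `Δ(xᵃtᶜ) = [xᵃ, tᶜ] = 0`, `Δ(xᵃu) = [xᵃ, u] = a xᵃ` and
`Δ(xᵃu·tᶜ) = a xᵃtᶜ + [xᵃu, tᶜ] = (a + c) xᵃtᶜ`.
-/

section

variable {A : Type*} [CommRing A]

def IsLeibnizBracket (br : A → A → A) : Prop :=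
  ∀ a b c : A, br a (b * c) = br a b * c + br a c * b

/-- `br` is the deviation of `Δ` from being a derivation (in characteristic 2, without signs). -/
def IsBVGenerator (Δ : A → A) (br : A → A → A) : Prop :=
  ∀ a b : A, Δ (a * b) = Δ a * b + a * Δ b + br a b

section Bracket

variable {br : A → A → A}

theorem IsLeibnizBracket.bracket_one (hleib : IsLeibnizBracket br) (g : A) : br g 1 = 0 := by
  have h := hleib g 1 1
  rw [mul_one, mul_one] at h
  linear_combination -h

theorem IsLeibnizBracket.bracket_pow_succ (hleib : IsLeibnizBracket br) (g h : A) (k : ℕ) :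
    br g (h ^ (k + 1)) = (k + 1) • (h ^ k * br g h) := by
  induction k with
  | zero => simp
  | succ k ih =>
    rw [pow_succ, hleib, ih, succ_nsmul _ (k + 1)]
    ring

theorem IsLeibnizBracket.bracket_pow_eq_zero (hleib : IsLeibnizBracket br) {g h : A}
    (hgh : br g h = 0) (k : ℕ) : br g (h ^ k) = 0 := by
  cases k with
  | zero => exact pow_zero h ▸ hleib.bracket_one g
  | succ k => rw [hleib.bracket_pow_succ, hgh, mul_zero, smul_zero]

theorem IsLeibnizBracket.bracket_pow_eq_nsmul (hleib : IsLeibnizBracket br) {g h : A}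
    (hgh : br g h = h) (k : ℕ) : br g (h ^ k) = k • h ^ k := by
  cases k with
  | zero => simpa using hleib.bracket_one g
  | succ k => rw [hleib.bracket_pow_succ, hgh, ← pow_succ]

theorem IsLeibnizBracket.bracket_pow_pow_eq_zero (hsymm : ∀ a b : A, br a b = br b a)
    (hleib : IsLeibnizBracket br) {g h : A} (hgh : br g h = 0) (a c : ℕ) :
    br (g ^ a) (h ^ c) = 0 := by
  have hhg : br (h ^ c) g = 0 := hsymm _ _ ▸ hleib.bracket_pow_eq_zero hgh c
  exact hsymm _ _ ▸ hleib.bracket_pow_eq_zero hhg a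

end Bracket

namespace IsBVGenerator

variable {Δ : A → A} {br : A → A → A}

theorem delta_one (hBV : IsBVGenerator Δ br) (hleib : IsLeibnizBracket br) : Δ 1 = 0 := by
  have h := hBV 1 1
  rw [hleib.bracket_one, mul_one, mul_one, one_mul] at h
  linear_combination -h

theorem delta_pow_eq_zero (hBV : IsBVGenerator Δ br) (hleib : IsLeibnizBracket br) {g : A}
    (hg : Δ g = 0) (hgg : br g g = 0) (k : ℕ) : Δ (g ^ k) = 0 := by
  induction k with
  | zero => simpa using hBV.delta_one hleib
  | succ k ih => rw [pow_succ', hBV, hg, ih, hleib.bracket_pow_eq_zero hgg, mul_zero, zero_mul,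
      add_zero, add_zero]

theorem delta_pow_mul_pow (hBV : IsBVGenerator Δ br) (hsymm : ∀ a b : A, br a b = br b a)
    (hleib : IsLeibnizBracket br) {g h : A} (hg : Δ g = 0) (hh : Δ h = 0) (hgg : br g g = 0)
    (hhh : br h h = 0) (hgh : br g h = 0) (a c : ℕ) : Δ (g ^ a * h ^ c) = 0 := by
  rw [hBV, hBV.delta_pow_eq_zero hleib hg hgg, hBV.delta_pow_eq_zero hleib hh hhh,
    hleib.bracket_pow_pow_eq_zero hsymm hgh]
  ring

theorem delta_pow_mul_mul_pow (hBV : IsBVGenerator Δ br) (hsymm : ∀ a b : A, br a b = br b a)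
    (hleib : IsLeibnizBracket br) {g v h : A} (hg : Δ g = 0) (hv : Δ v = 0) (hh : Δ h = 0)
    (hgg : br g g = 0) (hhh : br h h = 0) (hgh : br g h = 0) (hgv : br g v = g)
    (hvh : br v h = h) (a c : ℕ) : Δ (g ^ a * v * h ^ c) = (a + c) • (g ^ a * h ^ c) := by
  have hΔgv : Δ (g ^ a * v) = a • g ^ a := by
    rw [hBV, hBV.delta_pow_eq_zero hleib hg hgg, hv, hsymm,
      hleib.bracket_pow_eq_nsmul (hsymm v g ▸ hgv)]
    ring
  have hbr : br (h ^ c) (g ^ a * v) = c • (g ^ a * h ^ c) := by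
    rw [hleib, hsymm _ (g ^ a), hleib.bracket_pow_pow_eq_zero hsymm hgh, hsymm,
      hleib.bracket_pow_eq_nsmul hvh, zero_mul, zero_add, smul_mul_assoc, mul_comm]
  rw [hBV, hΔgv, hBV.delta_pow_eq_zero hleib hh hhh, hsymm, hbr, add_nsmul, smul_mul_assoc]
  ring

end IsBVGenerator

end

theorem stmt5_general (A : Type*) [CommRing A] (n : ℕ) (x u t : A) (Δ : A → A) (br : A → A → A)
    (hsymm : ∀ a b : A, br a b = br b a)
    (hleib : ∀ a b c : A, br a (b * c) = br a b * c + br a c * b)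
    (hBV : ∀ a b : A, Δ (a * b) = Δ a * b + a * Δ b + br a b)
    (hΔx : Δ x = 0) (hΔu : Δ u = 0) (hΔt : Δ t = 0)
    (hxu : br x u = x) (hxt : br x t = 0) (hut : br u t = t)
    (hxx : br x x = 0) (htt : br t t = 0) :
    ∀ a b c : ℕ, a ≤ n → b ≤ 1 →
      Δ (x ^ a * u ^ b * t ^ c) = ((a + c) * b) • (x ^ a * t ^ c) := by
  intro a b c _ hb
  interval_cases b
  · simpa using IsBVGenerator.delta_pow_mul_pow hBV hsymm hleib hΔx hΔt hxx htt hxt a c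
  · simpa using
      IsBVGenerator.delta_pow_mul_mul_pow hBV hsymm hleib hΔx hΔu hΔt hxx htt hxt hxu hut a c

/-- In `A = F₂[x,u,t]/(x^{n+1}, u², tx^n, ux^n)` with `n` even, a BV operator Δ vanishing
on generators, and bracket a symmetric biderivation with `[x,u]=x`, `[x,t]=0`, `[u,t]=t`,
one has `Δ(xᵃuᵇt^c) = (a+c)b·xᵃt^c` (mod 2). -/
theorem stmt5 (A : Type*) [CommRing A] (hchar : (2 : A) = 0)
    (n : ℕ) (hn : Even n) (hn0 : 0 < n)
    (x u t : A) (hxn : x ^ (n + 1) = 0) (hu2 : u ^ 2 = 0)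
    (htx : t * x ^ n = 0) (hux : u * x ^ n = 0)
    (Δ : A → A) (hΔadd : ∀ a b : A, Δ (a + b) = Δ a + Δ b)
    (br : A → A → A)
    (hsymm : ∀ a b : A, br a b = br b a)
    (haddr : ∀ a b c : A, br a (b + c) = br a b + br a c)
    (hleib : ∀ a b c : A, br a (b * c) = br a b * c + br a c * b)
    (hBV : ∀ a b : A, Δ (a * b) = Δ a * b + a * Δ b + br a b)
    (hΔx : Δ x = 0) (hΔu : Δ u = 0) (hΔt : Δ t = 0)
    (hxu : br x u = x) (hxt : br x t = 0) (hut : br u t = t)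
    (hxx : br x x = 0) (huu : br u u = 0) (htt : br t t = 0) :
    ∀ a b c : ℕ, a ≤ n → b ≤ 1 →
      Δ (x ^ a * u ^ b * t ^ c) = ((a + c) * b) • (x ^ a * t ^ c) :=
  stmt5_general A n x u t Δ br hsymm hleib hBV hΔx hΔu hΔt hxu hxt hut hxx htt
end

section
/- Let A = F_2[x,v,t]/(x^{n+1}, v^2 - εtx^{n-1}) with n odd, ε = (n+1)/2 mod 2, and Δ(x^a v^b t^c) = ab x^{a-1} t^c. Then: Δ(x^a v t^c) ≠ 0 iff a is odd; Δ² = 0; the image of Δ is spanned by {x^{2k} t^c : 0 ≤ 2k ≤ n-1, c ≥ 0}; and a basis for ker Δ / im Δ is given by the classes of {x^{2k} v t^c : 0 ≤ 2k ≤ n-1} ∪ {x^{2k+1} t^c : 0 ≤ 2k+1 ≤ n}, c ≥ 0. -/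
/-- The index type of the monomial basis `xᵃvᵇt^c` (`a ≤ n`, `b ≤ 1`, `c ≥ 0`) of
`A = F₂[x,v,t]/(x^{n+1}, v² - εtx^{n-1})`, `n` odd. -/
def I (n : ℕ) : Type := {p : ℕ × ℕ × ℕ // p.1 ≤ n ∧ p.2.1 ≤ 1}

/-- `A = F₂[x,v,t]/(x^{n+1}, v² - εtx^{n-1})` as the free `F₂`-module on its monomial
basis. -/
abbrev A11 (n : ℕ) : Type := I n →₀ ZMod 2

/-- The monomial `xᵃvᵇt^c` (junk value `0` if `a > n` or `b > 1`). -/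
noncomputable def mono11 (n a b c : ℕ) : A11 n :=
  if h : a ≤ n ∧ b ≤ 1 then Finsupp.single ⟨(a, b, c), h⟩ 1 else 0

/-- The operator `Δ` defined on the basis by `Δ(xᵃvᵇt^c) = ab·x^{a-1}t^c` and extended
linearly. -/
noncomputable def delta11 (n : ℕ) : A11 n →ₗ[ZMod 2] A11 n :=
  Finsupp.linearCombination (ZMod 2)
    (fun p : I n =>
      if p.1.2.1 = 1 ∧ p.1.1 % 2 = 1 then mono11 n (p.1.1 - 1) 0 p.1.2.2 else 0)

namespace S11


noncomputable def f (n : ℕ) : I n → A11 n :=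
  fun p => if p.1.2.1 = 1 ∧ p.1.1 % 2 = 1 then mono11 n (p.1.1 - 1) 0 p.1.2.2 else 0

lemma delta_eq (n : ℕ) : delta11 n = Finsupp.linearCombination (ZMod 2) (f n) := rfl

lemma mono11_eq {n a b : ℕ} (c : ℕ) (h : a ≤ n ∧ b ≤ 1) :
    mono11 n a b c = Finsupp.single (⟨(a, b, c), h⟩ : I n) 1 := dif_pos h

lemma Imk_eq_iff {n : ℕ} {x y : ℕ × ℕ × ℕ} {hx : x.1 ≤ n ∧ x.2.1 ≤ 1}
    {hy : y.1 ≤ n ∧ y.2.1 ≤ 1} : ((⟨x, hx⟩ : I n) = ⟨y, hy⟩) ↔ x = y :=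
  ⟨fun h => congrArg Subtype.val h, fun h => by subst h; rfl⟩

lemma delta_single (n : ℕ) (p : I n) :
    delta11 n (Finsupp.single p 1) = f n p := by
  rw [delta_eq, Finsupp.linearCombination_single, one_smul]

lemma f_mk (n pa pb pc : ℕ) (hp : pa ≤ n ∧ pb ≤ 1) (hP : pb = 1 ∧ pa % 2 = 1) :
    f n ⟨(pa, pb, pc), hp⟩ =
      Finsupp.single (⟨(pa - 1, 0, pc), ⟨le_trans (Nat.sub_le _ _) hp.1, Nat.zero_le 1⟩⟩ : I n) 1 := by
  simp only [f, hP.1, hP.2, and_self, if_true]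
  exact mono11_eq pc _

lemma f_mk_zero (n pa pb pc : ℕ) (hp : pa ≤ n ∧ pb ≤ 1) (hP : ¬(pb = 1 ∧ pa % 2 = 1)) :
    f n ⟨(pa, pb, pc), hp⟩ = 0 := by
  simp only [f]
  exact if_neg hP

/-- good case -/
lemma delta_apply (n : ℕ) (x : A11 n) (a c : ℕ) (ha : a % 2 = 0) (h1 : a ≤ n)
    (h2 : a + 1 ≤ n) :
    delta11 n x ⟨(a, 0, c), ⟨h1, Nat.zero_le 1⟩⟩
      = x ⟨(a + 1, 1, c), ⟨h2, le_refl 1⟩⟩ := by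
  classical
  rw [delta_eq, Finsupp.linearCombination_apply]
  erw [Finsupp.sum_apply]
  have hterm : ∀ p : I n,
      (x p • f n p) (⟨(a, 0, c), ⟨h1, Nat.zero_le 1⟩⟩ : I n)
        = if p = (⟨(a + 1, 1, c), ⟨h2, le_refl 1⟩⟩ : I n) then x p else 0 := by
    intro p
    set r := x p with hr
    clear_value r
    obtain ⟨⟨pa, pb, pc⟩, hp⟩ := p
    erw [Finsupp.smul_apply]
    by_cases hP : pb = 1 ∧ pa % 2 = 1
    · erw [f_mk n pa pb pc hp hP, Finsupp.single_apply]
      split_ifs with hc1 hc2 hc2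
      · simp
      · exfalso
        have h' := Imk_eq_iff.mp hc1
        simp only [Prod.mk.injEq] at h'
        obtain ⟨e1, e2, e3⟩ := h'
        apply hc2
        apply Imk_eq_iff.mpr
        have : pa = a + 1 := by omega
        simp only [Prod.mk.injEq]
        exact ⟨this, hP.1, e3⟩
      · exfalso
        have h' := Imk_eq_iff.mp hc2
        simp only [Prod.mk.injEq] at h'
        obtain ⟨e1, e2, e3⟩ := h'
        apply hc1
        apply Imk_eq_iff.mpr
        simp only [Prod.mk.injEq]
        exact ⟨by omega, trivial, e3⟩
      · simp
    · rw [f_mk_zero n pa pb pc hp hP]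
      erw [if_neg (show ¬((⟨(pa, pb, pc), hp⟩ : I n) = ⟨(a + 1, 1, c), ⟨h2, le_refl 1⟩⟩) from
        fun h => by have := Imk_eq_iff.mp h; simp only [Prod.mk.injEq] at this; omega)]
      simp
      right; rfl
  rw [Finsupp.sum]
  calc (∑ p ∈ x.support, (x p • f n p) (⟨(a, 0, c), ⟨h1, Nat.zero_le 1⟩⟩ : I n))
      = ∑ p ∈ x.support,
          (if p = (⟨(a + 1, 1, c), ⟨h2, le_refl 1⟩⟩ : I n) then x p else 0) :=
        Finset.sum_congr rfl fun p _ => hterm p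
    _ = _ := by
        erw [Finset.sum_ite_eq' x.support _ (fun p => x p)]
        split
        · rfl
        · exact (Finsupp.notMem_support_iff.mp (by assumption)).symm

/-- coordinate formula, bad case -/
lemma delta_apply_zero (n : ℕ) (x : A11 n) (q : I n)
    (hq : ¬(q.1.2.1 = 0 ∧ q.1.1 % 2 = 0)) : delta11 n x q = 0 := by
  classical
  rw [delta_eq, Finsupp.linearCombination_apply, Finsupp.sum_apply, Finsupp.sum]
  apply Finset.sum_eq_zero
  intro p _
  rw [Finsupp.smul_apply]
  obtain ⟨⟨pa, pb, pc⟩, hp⟩ := p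
  obtain ⟨⟨qa, qb, qc⟩, hqq⟩ := q
  replace hq : ¬(qb = 0 ∧ qa % 2 = 0) := hq
  by_cases hP : pb = 1 ∧ pa % 2 = 1
  · rw [f_mk n pa pb pc hp hP]
    erw [Finsupp.single_apply]
    have hne : (⟨(pa - 1, 0, pc), ⟨le_trans (Nat.sub_le _ _) hp.1, Nat.zero_le 1⟩⟩ : I n)
        ≠ ⟨(qa, qb, qc), hqq⟩ := by
      intro h
      have h' := Imk_eq_iff.mp h
      simp only [Prod.mk.injEq] at h'
      have := hP.2
      exact hq ⟨h'.2.1.symm, by omega⟩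
    erw [if_neg hne]
    simp
  · rw [f_mk_zero n pa pb pc hp hP]
    simp
    right; rfl


/-- kernel characterization -/
lemma mem_ker_iff (n : ℕ) (hn : Odd n) (x : A11 n) :
    x ∈ LinearMap.ker (delta11 n) ↔
      ∀ p : I n, p.1.2.1 = 1 → p.1.1 % 2 = 1 → x p = 0 := by
  constructor
  · intro hx p hb hodd
    obtain ⟨⟨qa, qb, qc⟩, hq⟩ := p
    replace hb : qb = 1 := hb
    replace hodd : qa % 2 = 1 := hodd
    subst hb
    have hq1 : qa ≤ n := hq.1
    have key := delta_apply n x (qa - 1) qc (by omega) (by omega) (by omega)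
    have hidx : (⟨(qa - 1 + 1, 1, qc), ⟨by omega, le_refl 1⟩⟩ : I n) = ⟨(qa, 1, qc), hq⟩ :=
      Subtype.ext (show ((qa - 1 + 1, 1, qc) : ℕ × ℕ × ℕ) = (qa, 1, qc) by
        rw [show qa - 1 + 1 = qa by omega])
    rw [← hidx, ← key, LinearMap.mem_ker.mp hx]
    rfl
  · intro hx
    rw [LinearMap.mem_ker]
    ext q
    rw [Finsupp.zero_apply]
    obtain ⟨⟨qa, qb, qc⟩, hq⟩ := q
    by_cases hT : qb = 0 ∧ qa % 2 = 0
    · have hq1 : qa ≤ n := hq.1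
      have h2 : qa + 1 ≤ n := by have := Nat.odd_iff.mp hn; omega
      obtain ⟨hb0, he⟩ := hT
      subst hb0
      rw [show (⟨(qa, 0, qc), hq⟩ : I n) = ⟨(qa, 0, qc), ⟨hq1, Nat.zero_le 1⟩⟩ from
        Subtype.ext rfl]
      rw [delta_apply n x qa qc he hq1 h2]
      exact hx ⟨(qa + 1, 1, qc), ⟨h2, le_refl 1⟩⟩ rfl (show (qa + 1) % 2 = 1 by omega)
    · exact delta_apply_zero n x ⟨(qa, qb, qc), hq⟩ hT

def Tset (n : ℕ) : Set (I n) := {p | p.1.2.1 = 0 ∧ p.1.1 % 2 = 0}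
def Dset (n : ℕ) : Set (I n) :=
  {p | (p.1.2.1 = 1 ∧ p.1.1 % 2 = 0) ∨ (p.1.2.1 = 0 ∧ p.1.1 % 2 = 1)}

lemma range_eq (n : ℕ) (hn : Odd n) :
    LinearMap.range (delta11 n) = Finsupp.supported (ZMod 2) (ZMod 2) (Tset n) := by
  apply le_antisymm
  · rintro y ⟨x, rfl⟩
    rw [Finsupp.mem_supported']
    intro q hq
    exact delta_apply_zero n x q (fun h => hq h)
  · rw [Finsupp.supported_eq_span_single, Submodule.span_le]
    rintro y ⟨p, hp, rfl⟩
    obtain ⟨⟨qa, qb, qc⟩, hq⟩ := p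
    replace hp : qb = 0 ∧ qa % 2 = 0 := hp
    obtain ⟨hb0, he⟩ := hp
    subst hb0
    have hq1 : qa ≤ n := hq.1
    have h2 : qa + 1 ≤ n := by have := Nat.odd_iff.mp hn; omega
    refine ⟨Finsupp.single (⟨(qa + 1, 1, qc), ⟨h2, le_refl 1⟩⟩ : I n) 1, ?_⟩
    erw [delta_single, f_mk n (qa + 1) 1 qc ⟨h2, le_refl 1⟩ ⟨rfl, show (qa + 1) % 2 = 1 by omega⟩]
    exact congrArg (fun q : I n => Finsupp.single q (1 : ZMod 2))
      (Subtype.ext (show ((qa + 1 - 1, 0, qc) : ℕ × ℕ × ℕ) = (qa, 0, qc) by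
        rw [show qa + 1 - 1 = qa by omega]))

lemma span_T (n : ℕ) (hn : Odd n) :
    Submodule.span (ZMod 2) {y | ∃ k c : ℕ, 2 * k ≤ n - 1 ∧ y = mono11 n (2 * k) 0 c}
      = Finsupp.supported (ZMod 2) (ZMod 2) (Tset n) := by
  rw [Finsupp.supported_eq_span_single]
  congr 1
  ext y
  constructor
  · rintro ⟨k, c, hk, rfl⟩
    have hle : 2 * k ≤ n := le_trans hk (Nat.sub_le n 1)
    refine ⟨⟨(2 * k, 0, c), ⟨hle, Nat.zero_le 1⟩⟩, ⟨rfl, show (2 * k) % 2 = 0 by omega⟩, ?_⟩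
    rw [mono11_eq c ⟨hle, Nat.zero_le 1⟩]
    rfl
  · rintro ⟨p, hp, rfl⟩
    obtain ⟨⟨qa, qb, qc⟩, hq⟩ := p
    replace hp : qb = 0 ∧ qa % 2 = 0 := hp
    obtain ⟨hb0, he⟩ := hp
    subst hb0
    have hq1 : qa ≤ n := hq.1
    refine ⟨qa / 2, qc, by have := Nat.odd_iff.mp hn; omega, ?_⟩
    rw [mono11_eq qc ⟨by omega, Nat.zero_le 1⟩]
    congr 1
    apply Imk_eq_iff.mpr
    rw [show 2 * (qa / 2) = qa by omega]

lemma delta_delta_single (n : ℕ) (p : I n) :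
    delta11 n (delta11 n (Finsupp.single p 1)) = 0 := by
  rw [delta_single]
  obtain ⟨⟨pa, pb, pc⟩, hp⟩ := p
  by_cases hP : pb = 1 ∧ pa % 2 = 1
  · erw [f_mk n pa pb pc hp hP, delta_single,
      f_mk_zero n (pa - 1) 0 pc _ (by simp)]
  · rw [f_mk_zero n pa pb pc hp hP, map_zero]

lemma delta_sq (n : ℕ) : delta11 n ∘ₗ delta11 n = 0 := by
  apply Finsupp.lhom_ext
  intro p r
  have : (Finsupp.single p r : A11 n) = r • Finsupp.single p 1 := by
    rw [Finsupp.smul_single, smul_eq_mul, mul_one]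
  rw [LinearMap.comp_apply, this, map_smul, map_smul, delta_delta_single, smul_zero,
    LinearMap.zero_apply]

lemma part1 (n a c : ℕ) (ha : a ≤ n) :
    delta11 n (mono11 n a 1 c) ≠ 0 ↔ Odd a := by
  erw [mono11_eq c ⟨ha, le_refl 1⟩, delta_single]
  constructor
  · intro h
    by_contra hodd
    exact h (f_mk_zero n a 1 c _ (by rw [Nat.odd_iff] at hodd; tauto))
  · intro hodd
    rw [f_mk n a 1 c _ ⟨rfl, Nat.odd_iff.mp hodd⟩]
    exact fun h => one_ne_zero (Finsupp.single_eq_zero.mp h)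


lemma U_eq (n : ℕ) (hn : Odd n) :
    ({y | ∃ k c : ℕ, 2 * k ≤ n - 1 ∧
        y = (LinearMap.range (delta11 n)).mkQ (mono11 n (2 * k) 1 c)}
      ∪ {y | ∃ k c : ℕ, 2 * k + 1 ≤ n ∧
        y = (LinearMap.range (delta11 n)).mkQ (mono11 n (2 * k + 1) 0 c)})
    = (LinearMap.range (delta11 n)).mkQ ''
        ((fun p : I n => Finsupp.single p (1 : ZMod 2)) '' Dset n) := by
  ext y
  constructor
  · rintro (⟨k, c, hk, rfl⟩ | ⟨k, c, hk, rfl⟩)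
    · have hle : 2 * k ≤ n := le_trans hk (Nat.sub_le n 1)
      refine ⟨Finsupp.single (⟨(2 * k, 1, c), ⟨hle, le_refl 1⟩⟩ : I n) 1,
        ⟨⟨(2 * k, 1, c), ⟨hle, le_refl 1⟩⟩,
          Or.inl ⟨rfl, show (2 * k) % 2 = 0 by omega⟩, rfl⟩, ?_⟩
      rw [mono11_eq c ⟨hle, le_refl 1⟩]
      rfl
    · refine ⟨Finsupp.single (⟨(2 * k + 1, 0, c), ⟨hk, Nat.zero_le 1⟩⟩ : I n) 1,
        ⟨⟨(2 * k + 1, 0, c), ⟨hk, Nat.zero_le 1⟩⟩,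
          Or.inr ⟨rfl, show (2 * k + 1) % 2 = 1 by omega⟩, rfl⟩, ?_⟩
      rw [mono11_eq c ⟨hk, Nat.zero_le 1⟩]
      rfl
  · rintro ⟨_, ⟨p, hD, rfl⟩, rfl⟩
    obtain ⟨⟨qa, qb, qc⟩, hq⟩ := p
    have hq1 : qa ≤ n := hq.1
    replace hD : (qb = 1 ∧ qa % 2 = 0) ∨ (qb = 0 ∧ qa % 2 = 1) := hD
    rcases hD with ⟨hb, he⟩ | ⟨hb, he⟩
    · subst hb
      left
      refine ⟨qa / 2, qc, by have := Nat.odd_iff.mp hn; omega, ?_⟩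
      rw [mono11_eq qc ⟨by omega, le_refl 1⟩]
      exact (congrArg _ (congrArg (fun q : I n => Finsupp.single q (1 : ZMod 2))
        (Subtype.ext (show ((2 * (qa / 2), 1, qc) : ℕ × ℕ × ℕ) = (qa, 1, qc) by
          rw [show 2 * (qa / 2) = qa by omega])))).symm
    · subst hb
      right
      refine ⟨qa / 2, qc, by omega, ?_⟩
      rw [mono11_eq qc ⟨by omega, Nat.zero_le 1⟩]
      exact (congrArg _ (congrArg (fun q : I n => Finsupp.single q (1 : ZMod 2))
        (Subtype.ext (show ((2 * (qa / 2) + 1, 0, qc) : ℕ × ℕ × ℕ) = (qa, 0, qc) by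
          rw [show 2 * (qa / 2) + 1 = qa by omega])))).symm

lemma disjointDT (n : ℕ) : Disjoint (Dset n) (Tset n) := by
  rw [Set.disjoint_left]
  intro p hD hT
  replace hD : (p.1.2.1 = 1 ∧ p.1.1 % 2 = 0) ∨ (p.1.2.1 = 0 ∧ p.1.1 % 2 = 1) := hD
  replace hT : p.1.2.1 = 0 ∧ p.1.1 % 2 = 0 := hT
  omega

lemma part4a (n : ℕ) (hn : Odd n) :
    Submodule.span (ZMod 2)
        ({y | ∃ k c : ℕ, 2 * k ≤ n - 1 ∧
            y = (LinearMap.range (delta11 n)).mkQ (mono11 n (2 * k) 1 c)}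
          ∪ {y | ∃ k c : ℕ, 2 * k + 1 ≤ n ∧
            y = (LinearMap.range (delta11 n)).mkQ (mono11 n (2 * k + 1) 0 c)})
      = Submodule.map (LinearMap.range (delta11 n)).mkQ (LinearMap.ker (delta11 n)) := by
  classical
  rw [U_eq n hn, Submodule.span_image, ← Finsupp.supported_eq_span_single]
  apply le_antisymm
  · apply Submodule.map_mono
    intro x hx
    rw [Finsupp.mem_supported'] at hx
    rw [mem_ker_iff n hn x]
    intro p hb hodd
    apply hx
    intro hmem
    replace hmem : (p.1.2.1 = 1 ∧ p.1.1 % 2 = 0) ∨ (p.1.2.1 = 0 ∧ p.1.1 % 2 = 1) := hmem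
    omega
  · rintro y ⟨x, hx, rfl⟩
    refine ⟨x.filter (fun p => ¬ p ∈ Tset n), ?_, ?_⟩
    · rw [SetLike.mem_coe, Finsupp.mem_supported']
      intro q hq
      by_cases hT : q ∈ Tset n
      · rw [Finsupp.filter_apply, if_neg (not_not_intro hT)]
      · rw [Finsupp.filter_apply, if_pos hT]
        replace hT : ¬(q.1.2.1 = 0 ∧ q.1.1 % 2 = 0) := hT
        replace hq : ¬((q.1.2.1 = 1 ∧ q.1.1 % 2 = 0) ∨ (q.1.2.1 = 0 ∧ q.1.1 % 2 = 1)) := hq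
        have hble : q.1.2.1 ≤ 1 := q.2.2
        have hb1 : q.1.2.1 = 1 := by omega
        have hodd : q.1.1 % 2 = 1 := by omega
        exact (mem_ker_iff n hn x).mp hx q hb1 hodd
    · have h0 : (LinearMap.range (delta11 n)).mkQ (x.filter (fun p => p ∈ Tset n)) = 0 := by
        rw [Submodule.mkQ_apply, Submodule.Quotient.mk_eq_zero, range_eq n hn,
          Finsupp.mem_supported']
        intro q hq
        rw [Finsupp.filter_apply]
        exact if_neg hq
      conv_rhs => rw [← Finsupp.filter_pos_add_filter_neg x (fun p => p ∈ Tset n)]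
      rw [map_add, h0, zero_add]

lemma part4b (n : ℕ) (hn : Odd n) :
    LinearIndependent (ZMod 2)
      (Subtype.val :
        ({y | ∃ k c : ℕ, 2 * k ≤ n - 1 ∧
            y = (LinearMap.range (delta11 n)).mkQ (mono11 n (2 * k) 1 c)}
          ∪ {y | ∃ k c : ℕ, 2 * k + 1 ≤ n ∧
            y = (LinearMap.range (delta11 n)).mkQ (mono11 n (2 * k + 1) 0 c)} :
          Set (A11 n ⧸ LinearMap.range (delta11 n))) → _) := by
  have hbasis : LinearIndependent (ZMod 2) (fun i : I n => Finsupp.single i (1 : ZMod 2)) := by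
    have := (Finsupp.basisSingleOne (ι := I n) (R := ZMod 2)).linearIndependent
    rwa [Finsupp.coe_basisSingleOne] at this
  have hV : LinearIndependent (ZMod 2)
      (fun p : Dset n => Finsupp.single (p : I n) (1 : ZMod 2)) :=
    hbasis.comp _ Subtype.val_injective
  have hrange : (Set.range fun p : Dset n => Finsupp.single (p : I n) (1 : ZMod 2))
      = (fun i : I n => Finsupp.single i (1 : ZMod 2)) '' Dset n := by
    rw [Set.image_eq_range]
  have hdisj : Disjoint
      (Submodule.span (ZMod 2)
        (Set.range fun p : Dset n => Finsupp.single (p : I n) (1 : ZMod 2)))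
      (LinearMap.ker (LinearMap.range (delta11 n)).mkQ) := by
    rw [Submodule.ker_mkQ, range_eq n hn, hrange, ← Finsupp.supported_eq_span_single]
    exact Finsupp.disjoint_supported_supported (disjointDT n)
  have hQV := hV.map hdisj
  have hset : ((LinearMap.range (delta11 n)).mkQ ''
        ((fun i : I n => Finsupp.single i (1 : ZMod 2)) '' Dset n))
      = Set.range (⇑(LinearMap.range (delta11 n)).mkQ ∘
          fun p : Dset n => Finsupp.single (p : I n) (1 : ZMod 2)) := by
    rw [Set.range_comp, hrange]
  rw [U_eq n hn, hset]
  exact (linearIndepOn_id_range_iff hQV.injective).mpr hQV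

end S11

/-- For `A = F₂[x,v,t]/(x^{n+1}, v² - εtx^{n-1})` with `n` odd and
`Δ(xᵃvᵇt^c) = ab·x^{a-1}t^c`: (1) `Δ(xᵃvt^c) ≠ 0` iff `a` is odd; (2) `Δ² = 0`;
(3) the image of `Δ` is spanned by `{x^{2k}t^c : 2k ≤ n-1}`; (4) the classes of
`{x^{2k}vt^c : 2k ≤ n-1} ∪ {x^{2k+1}t^c : 2k+1 ≤ n}` form a basis of `ker Δ / im Δ`
(they span it and are linearly independent). -/
theorem stmt11 (n : ℕ) (hn : Odd n) :
    (∀ a c : ℕ, a ≤ n → (delta11 n (mono11 n a 1 c) ≠ 0 ↔ Odd a)) ∧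
    (delta11 n ∘ₗ delta11 n = 0) ∧
    (LinearMap.range (delta11 n) = Submodule.span (ZMod 2)
      {y | ∃ k c : ℕ, 2 * k ≤ n - 1 ∧ y = mono11 n (2 * k) 0 c}) ∧
    (Submodule.span (ZMod 2)
        ({y | ∃ k c : ℕ, 2 * k ≤ n - 1 ∧
            y = (LinearMap.range (delta11 n)).mkQ (mono11 n (2 * k) 1 c)}
          ∪ {y | ∃ k c : ℕ, 2 * k + 1 ≤ n ∧
            y = (LinearMap.range (delta11 n)).mkQ (mono11 n (2 * k + 1) 0 c)})
      = Submodule.map (LinearMap.range (delta11 n)).mkQ (LinearMap.ker (delta11 n)) ∧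
      LinearIndependent (ZMod 2)
        (Subtype.val :
          ({y | ∃ k c : ℕ, 2 * k ≤ n - 1 ∧
              y = (LinearMap.range (delta11 n)).mkQ (mono11 n (2 * k) 1 c)}
            ∪ {y | ∃ k c : ℕ, 2 * k + 1 ≤ n ∧
              y = (LinearMap.range (delta11 n)).mkQ (mono11 n (2 * k + 1) 0 c)} :
            Set (A11 n ⧸ LinearMap.range (delta11 n))) → _)) :=
  ⟨fun a c ha => S11.part1 n a c ha, S11.delta_sq n,
    (S11.range_eq n hn).trans (S11.span_T n hn).symm,
    S11.part4a n hn, S11.part4b n hn⟩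
end
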